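/- arXiv:2409.04881 — 5 statements merged into one kernel-verified Lean document; each statement's English description precedes it below -/
import Mathlib

section
/- For every ℓ ≥ 1, the number of subgroups of ℤ^ℓ of index p^m (p prime, m ≥ 1) equals ((p^ℓ - 1)(p^{ℓ+1} - 1)⋯(p^{ℓ+m-1} - 1)) / ((p - 1)(p^2 - 1)⋯(p^m - 1)). -/
/-- Number of subgroups of `ℤ^ℓ` of index `n`. -/
noncomputable def g (ℓ n : ℕ) : ℕ := Nat.card {H : AddSubgroup (Fin ℓ → ℤ) // H.index = n}

/-- `N ℓ n = |Hom(ℤ^ℓ, S_n)| / n!`, the number of ℓ-tuples of pairwise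
commuting permutations of `n` letters, divided by `n!`. -/
noncomputable def N (ℓ n : ℕ) : ℚ :=
  (Nat.card {π : Fin ℓ → Equiv.Perm (Fin n) // ∀ i j, Commute (π i) (π j)} : ℚ) / n.factorial

/-!
Split `ℤ^(ℓ+1) = ℤ × B` with `B = ℤ^ℓ`. A subgroup `H` of index `n` is determined by the index
`d` of its projection `dℤ` to `ℤ`, by `K = H ∩ B`, of index `n / d`, and by the class modulo `K`
of any `b` with `(d, b) ∈ H`; conversely every such triple occurs. Hence
`g (ℓ+1) n = ∑_{d ∣ n} (n/d) g ℓ (n/d)`, which for `n = p^m` reads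
`g (ℓ+1) (p^m) = ∑_{k ≤ m} p^k g ℓ (p^k)`. The right-hand side of the theorem, a `p`-analogue of
the number `(ℓ+m-1).choose m` of multisets, satisfies the same recursion in `ℓ` and agrees with
`g 0 (p^m)` at `ℓ = 0`.
-/

open AddSubgroup

theorem Int.addSubgroup_eq_zmultiples_index (S : AddSubgroup ℤ) :
    S = zmultiples (S.index : ℤ) := by
  obtain ⟨a, rfl⟩ := Int.subgroup_cyclic S
  rw [← zmultiples_eq_closure, Int.index_zmultiples, Int.zmultiples_natAbs]

theorem Nat.div_ne_zero_of_mem_divisors {n d : ℕ} (hd : d ∈ n.divisors) : n / d ≠ 0 :=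
  (Nat.div_pos (Nat.divisor_le hd) (Nat.pos_of_mem_divisors hd)).ne'

theorem AddSubgroup.index_eq_index_map_fst_mul_index_comap_inr {A B : Type*} [AddCommGroup A]
    [AddCommGroup B] (H : AddSubgroup (A × B)) :
    H.index = (H.map (AddMonoidHom.fst A B)).index * (H.comap (AddMonoidHom.inr A B)).index := by
  have hker : (AddMonoidHom.fst A B).ker = (AddMonoidHom.inr A B).range := by
    ext ⟨a, b⟩
    simp [mem_prod, eq_comm]
  rw [← relIndex_mul_index (le_sup_left : H ≤ H ⊔ (AddMonoidHom.fst A B).ker), relIndex_sup_left,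
    ← comap_map_eq, index_comap_of_surjective _ Prod.fst_surjective, hker, ← index_comap,
    mul_comm]

def AddEquiv.subgroupsOfIndexEquiv {G G' : Type*} [AddGroup G] [AddGroup G'] (e : G ≃+ G')
    (n : ℕ) : {H : AddSubgroup G // H.index = n} ≃ {H : AddSubgroup G' // H.index = n} :=
  e.mapAddSubgroup.toEquiv.subtypeEquiv fun H => by simp [index_map_equiv]

noncomputable def sigmaQuotientEquivProdFin {G : Type*} [AddGroup G] {e : ℕ} (he : e ≠ 0) :
    (Σ K : {K : AddSubgroup G // K.index = e}, G ⧸ K.1) ≃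
      {K : AddSubgroup G // K.index = e} × Fin e :=
  Equiv.sigmaEquivProdOfEquiv fun K =>
    have : K.1.FiniteIndex := ⟨by rw [K.2]; exact he⟩
    Finite.equivFinOfCardEq (by rw [← index_eq_card, K.2])

section ProdInt

variable {B : Type*} [AddCommGroup B]

def zmultiplesMod (d : ℤ) (K : AddSubgroup B) (v : B ⧸ K) : AddSubgroup (ℤ × B) :=
  (zmultiples (d, v)).comap ((AddMonoidHom.id ℤ).prodMap (QuotientAddGroup.mk' K))

section

variable {d : ℤ} {K : AddSubgroup B} {v : B ⧸ K}

theorem mem_zmultiplesMod {z : ℤ × B} :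
    z ∈ zmultiplesMod d K v ↔ ∃ k : ℤ, k * d = z.1 ∧ k • v = z.2 := by
  simp [zmultiplesMod, mem_zmultiples_iff, Prod.ext_iff]

theorem map_fst_zmultiplesMod :
    (zmultiplesMod d K v).map (AddMonoidHom.fst ℤ B) = zmultiples d := by
  ext x
  simp only [mem_map, mem_zmultiplesMod, AddMonoidHom.coe_fst, Prod.exists, mem_zmultiples_iff,
    smul_eq_mul]
  constructor
  · rintro ⟨_, _, ⟨k, hk, -⟩, rfl⟩
    exact ⟨k, hk⟩
  · rintro ⟨k, rfl⟩
    obtain ⟨b, hb⟩ := QuotientAddGroup.mk_surjective (k • v)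
    exact ⟨k * d, b, ⟨k, rfl, hb.symm⟩, rfl⟩

theorem comap_inr_zmultiplesMod (hd : d ≠ 0) :
    (zmultiplesMod d K v).comap (AddMonoidHom.inr ℤ B) = K := by
  ext y
  simp [mem_zmultiplesMod, hd, eq_comm (a := (0 : B ⧸ K))]

theorem index_zmultiplesMod (hd : d ≠ 0) :
    (zmultiplesMod d K v).index = d.natAbs * K.index := by
  rw [index_eq_index_map_fst_mul_index_comap_inr, map_fst_zmultiplesMod,
    comap_inr_zmultiplesMod hd, Int.index_zmultiples]

theorem zmultiplesMod_injective (hd : d ≠ 0) : Function.Injective (zmultiplesMod d K) := by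
  intro v w h
  obtain ⟨b, rfl⟩ := QuotientAddGroup.mk_surjective v
  have hb : (d, b) ∈ zmultiplesMod d K w := h ▸ mem_zmultiplesMod.2 ⟨1, one_mul d, one_zsmul _⟩
  obtain ⟨k, hk, hkw⟩ := mem_zmultiplesMod.1 hb
  obtain rfl : k = 1 := (mul_left_eq_self₀.1 hk).resolve_right hd
  simpa using hkw.symm

theorem eq_zmultiplesMod {H : AddSubgroup (ℤ × B)} {b : B}
    (hH : H.map (AddMonoidHom.fst ℤ B) = zmultiples d) (hb : (d, b) ∈ H) :
    H = zmultiplesMod d (H.comap (AddMonoidHom.inr ℤ B)) b := by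
  have mem_iff (k : ℤ) (y : B) :
      (k * d, y) ∈ H ↔ y - k • b ∈ H.comap (AddMonoidHom.inr ℤ B) := by
    have : (k * d, y) = k • (d, b) + (0, y - k • b) := by ext <;> simp
    rw [this, add_mem_cancel_left (zsmul_mem hb k)]
    rfl
  ext ⟨x, y⟩
  rw [mem_zmultiplesMod]
  constructor
  · intro hxy
    obtain ⟨k, rfl⟩ : x ∈ zmultiples d := hH ▸ mem_map_of_mem (AddMonoidHom.fst ℤ B) hxy
    refine ⟨k, (smul_eq_mul k d).symm, ?_⟩
    rw [← QuotientAddGroup.mk_zsmul, eq_comm, QuotientAddGroup.eq_iff_sub_mem, ← mem_iff]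
    simpa using hxy
  · rintro ⟨k, rfl, hk⟩
    rw [mem_iff, ← QuotientAddGroup.eq_iff_sub_mem, QuotientAddGroup.mk_zsmul]
    exact hk.symm

end

theorem exists_eq_zmultiplesMod (H : AddSubgroup (ℤ × B)) :
    ∃ b : B, H = zmultiplesMod (H.map (AddMonoidHom.fst ℤ B)).index
      (H.comap (AddMonoidHom.inr ℤ B)) b := by
  set d := (H.map (AddMonoidHom.fst ℤ B)).index
  have hmap : H.map (AddMonoidHom.fst ℤ B) = zmultiples (d : ℤ) :=
    Int.addSubgroup_eq_zmultiples_index _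
  obtain ⟨⟨_, b⟩, hb, rfl⟩ : (d : ℤ) ∈ H.map (AddMonoidHom.fst ℤ B) := hmap ▸ mem_zmultiples _
  exact ⟨b, eq_zmultiplesMod hmap hb⟩

noncomputable def zmultiplesModEquiv (n : ℕ) (hn : n ≠ 0) :
    (Σ d : n.divisors, Σ K : {K : AddSubgroup B // K.index = n / d}, B ⧸ K.1) ≃
      {H : AddSubgroup (ℤ × B) // H.index = n} := by
  refine Equiv.ofBijective (fun x => ⟨zmultiplesMod (x.1 : ℕ) x.2.1 x.2.2, ?_⟩) ⟨?_, ?_⟩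
  · obtain ⟨⟨d, hd⟩, ⟨K, hK⟩, v⟩ := x
    rw [index_zmultiplesMod (mod_cast (Nat.pos_of_mem_divisors hd).ne'), hK, Int.natAbs_natCast,
      Nat.mul_div_cancel' (Nat.dvd_of_mem_divisors hd)]
  · rintro ⟨⟨d, hd⟩, ⟨K, hK⟩, v⟩ ⟨⟨d', hd'⟩, ⟨K', hK'⟩, v'⟩ h
    have hd0 : (d : ℤ) ≠ 0 := mod_cast (Nat.pos_of_mem_divisors hd).ne'
    simp only [Subtype.mk.injEq] at h
    obtain rfl : d = d' := by
      simpa [map_fst_zmultiplesMod] using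
        congrArg (fun H => (H.map (AddMonoidHom.fst ℤ B)).index) h
    obtain rfl : K = K' := by
      simpa [comap_inr_zmultiplesMod hd0] using congrArg (comap (AddMonoidHom.inr ℤ B)) h
    obtain rfl : v = v' := zmultiplesMod_injective hd0 h
    rfl
  · rintro ⟨H, hH⟩
    obtain ⟨b, hb⟩ := exists_eq_zmultiplesMod H
    set d := (H.map (AddMonoidHom.fst ℤ B)).index
    set K := H.comap (AddMonoidHom.inr ℤ B)
    have hdK : d * K.index = n := hH ▸ (index_eq_index_map_fst_mul_index_comap_inr H).symm
    have hd : d ∈ n.divisors := Nat.mem_divisors.2 ⟨Dvd.intro _ hdK, hn⟩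
    exact ⟨⟨⟨d, hd⟩, ⟨K, Nat.eq_div_of_mul_eq_right (Nat.pos_of_mem_divisors hd).ne' hdK⟩, b⟩,
      Subtype.ext hb.symm⟩

noncomputable def subgroupsOfIndexProdIntEquiv (n : ℕ) (hn : n ≠ 0) :
    {H : AddSubgroup (ℤ × B) // H.index = n} ≃
      Σ d : n.divisors, {K : AddSubgroup B // K.index = n / d} × Fin (n / d) :=
  (zmultiplesModEquiv n hn).symm.trans <|
    Equiv.sigmaCongrRight fun d => sigmaQuotientEquivProdFin (Nat.div_ne_zero_of_mem_divisors d.2)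

theorem finite_subgroups_prod_int {n : ℕ} (hn : n ≠ 0)
    (hfin : ∀ d ∈ n.divisors, Finite {K : AddSubgroup B // K.index = n / d}) :
    Finite {H : AddSubgroup (ℤ × B) // H.index = n} :=
  have (d : n.divisors) := hfin d d.2
  .of_equiv _ (subgroupsOfIndexProdIntEquiv n hn).symm

theorem card_subgroups_prod_int {n : ℕ} (hn : n ≠ 0)
    (hfin : ∀ d ∈ n.divisors, Finite {K : AddSubgroup B // K.index = n / d}) :
    Nat.card {H : AddSubgroup (ℤ × B) // H.index = n} =
      ∑ d ∈ n.divisors, n / d * Nat.card {K : AddSubgroup B // K.index = n / d} := by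
  have (d : n.divisors) := hfin d d.2
  rw [Nat.card_congr (subgroupsOfIndexProdIntEquiv n hn), Nat.card_sigma,
    ← Finset.sum_coe_sort n.divisors]
  simp only [Nat.card_prod, Nat.card_fin, mul_comm]

end ProdInt

def finSuccIntAddEquiv (ℓ : ℕ) : ℤ × (Fin ℓ → ℤ) ≃+ (Fin (ℓ + 1) → ℤ) :=
  (Fin.consLinearEquiv ℤ fun _ : Fin (ℓ + 1) => ℤ).toAddEquiv

theorem finite_subgroups_pi_int (ℓ : ℕ) {n : ℕ} (hn : n ≠ 0) :
    Finite {H : AddSubgroup (Fin ℓ → ℤ) // H.index = n} := by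
  induction ℓ generalizing n with
  | zero => infer_instance
  | succ ℓ ih =>
    have := finite_subgroups_prod_int hn fun d hd => ih (Nat.div_ne_zero_of_mem_divisors hd)
    exact .of_equiv _ ((finSuccIntAddEquiv ℓ).subgroupsOfIndexEquiv n)

theorem g_zero_left {n : ℕ} (hn : n ≠ 1) : g 0 n = 0 := by
  rw [g, Nat.card_eq_zero]
  left
  constructor
  rintro ⟨H, rfl⟩
  exact hn (by simp [Subsingleton.elim H ⊤])

theorem g_one_right (ℓ : ℕ) : g ℓ 1 = 1 := by
  rw [g, Nat.card_eq_one_iff_exists]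
  exact ⟨⟨⊤, index_top⟩, fun H => Subtype.ext (index_eq_one.1 H.2)⟩

theorem g_succ_left (ℓ : ℕ) {n : ℕ} (hn : n ≠ 0) :
    g (ℓ + 1) n = ∑ d ∈ n.divisors, n / d * g ℓ (n / d) := by
  rw [g, ← Nat.card_congr ((finSuccIntAddEquiv ℓ).subgroupsOfIndexEquiv n)]
  exact card_subgroups_prod_int hn fun d hd =>
    finite_subgroups_pi_int ℓ (Nat.div_ne_zero_of_mem_divisors hd)

theorem g_succ_left_prime_pow (ℓ : ℕ) {p : ℕ} (hp : p.Prime) (m : ℕ) :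
    g (ℓ + 1) (p ^ m) = ∑ k ∈ Finset.range (m + 1), p ^ k * g ℓ (p ^ k) := by
  rw [g_succ_left ℓ (pow_ne_zero m hp.ne_zero), Nat.sum_divisors_prime_pow hp,
    ← Finset.sum_range_reflect (fun k => p ^ k * g ℓ (p ^ k))]
  refine Finset.sum_congr rfl fun k hk => ?_
  rw [Nat.pow_div (by simpa [Nat.lt_succ_iff] using hk) hp.pos, Nat.add_sub_cancel]

def qMultichoose {K : Type*} [Field K] (q : K) (ℓ m : ℕ) : K :=
  (∏ i ∈ Finset.range m, (q ^ (ℓ + i) - 1)) / ∏ i ∈ Finset.range m, (q ^ (i + 1) - 1)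

section QMultichoose

variable {K : Type*} [Field K] (q : K)

theorem qMultichoose_zero_right (ℓ : ℕ) : qMultichoose q ℓ 0 = 1 := by
  simp [qMultichoose]

theorem qMultichoose_zero_left_succ (m : ℕ) : qMultichoose q 0 (m + 1) = 0 := by
  simp [qMultichoose, Finset.prod_range_succ']

theorem qMultichoose_succ_right (ℓ m : ℕ) :
    qMultichoose q ℓ (m + 1) =
      qMultichoose q ℓ m * ((q ^ (ℓ + m) - 1) / (q ^ (m + 1) - 1)) := by
  simp only [qMultichoose, Finset.prod_range_succ, mul_div_mul_comm]

theorem qMultichoose_succ_right_eq_succ_left_mul (ℓ m : ℕ) :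
    qMultichoose q ℓ (m + 1) =
      qMultichoose q (ℓ + 1) m * ((q ^ ℓ - 1) / (q ^ (m + 1) - 1)) := by
  rw [qMultichoose, qMultichoose, Finset.prod_range_succ', Finset.prod_range_succ _ m,
    mul_div_mul_comm]
  simp only [add_zero, add_assoc, add_comm 1]

variable {q}

theorem qMultichoose_succ_left (hq : ∀ j, q ^ (j + 1) ≠ 1) (ℓ m : ℕ) :
    qMultichoose q (ℓ + 1) m = ∑ k ∈ Finset.range (m + 1), q ^ k * qMultichoose q ℓ k := by
  induction m with
  | zero => simp [qMultichoose_zero_right]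
  | succ m ih =>
    have hm : q ^ (m + 1) - 1 ≠ 0 := sub_ne_zero.2 (hq m)
    rw [Finset.sum_range_succ, ← ih, qMultichoose_succ_right,
      qMultichoose_succ_right_eq_succ_left_mul]
    field_simp
    ring

end QMultichoose

theorem g_prime_pow_general (ℓ : ℕ) (p : ℕ) (hp : p.Prime) (m : ℕ) :
    (g ℓ (p ^ m) : ℚ) =
      (∏ i ∈ Finset.range m, ((p : ℚ) ^ (ℓ + i) - 1)) /
        ∏ i ∈ Finset.range m, ((p : ℚ) ^ (i + 1) - 1) := by
  have hq (j : ℕ) : (p : ℚ) ^ (j + 1) ≠ 1 :=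
    (one_lt_pow₀ (Nat.one_lt_cast.2 hp.one_lt) j.succ_ne_zero).ne'
  change (g ℓ (p ^ m) : ℚ) = qMultichoose (p : ℚ) ℓ m
  induction ℓ generalizing m with
  | zero =>
    rcases m with _ | m
    · simp [g_one_right, qMultichoose_zero_right]
    · rw [g_zero_left (Nat.one_lt_pow m.succ_ne_zero hp.one_lt).ne',
        qMultichoose_zero_left_succ, Nat.cast_zero]
  | succ ℓ ih =>
    rw [g_succ_left_prime_pow ℓ hp, qMultichoose_succ_left hq]
    push_cast
    simp only [ih]

theorem g_prime_pow (ℓ : ℕ) (hℓ : 1 ≤ ℓ) (p : ℕ) (hp : p.Prime) (m : ℕ) (hm : 1 ≤ m) :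
    (g ℓ (p ^ m) : ℚ) =
      (∏ i ∈ Finset.range m, ((p : ℚ) ^ (ℓ + i) - 1)) /
        ∏ i ∈ Finset.range m, ((p : ℚ) ^ (i + 1) - 1) :=
  g_prime_pow_general ℓ p hp m
end

section
/- For every ℓ ≥ 1 and n ≥ 1, g_ℓ(n) = ∑_{d | n} d · g_{ℓ-1}(d), where g_0(1) = 1 and g_0(n) = 0 for n > 1. -/
/-!
Write `ℤ^ℓ = ℤ × A` with `A = ℤ^(ℓ-1)`. A subgroup `H` of index `n` meets `A` in a subgroup `K`
of some index `d ∣ n`, and projects onto `aℤ ⊆ ℤ` with `a = n / d`. Choosing `p ∈ H` over `a`,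
`H` is generated by `K` and `p`, so it is determined by `K` and the class of `p` in `A ⧸ K`;
conversely every pair (`K`, class in `A ⧸ K`) arises. Hence exactly `d · g_{ℓ-1}(d)` subgroups of
index `n` meet `A` in a subgroup of index `d`.
-/

open AddSubgroup

theorem AddEquiv.card_addSubgroup_index_eq {G G' : Type*} [AddGroup G] [AddGroup G'] (e : G ≃+ G')
    (n : ℕ) :
    Nat.card {H : AddSubgroup G // H.index = n} = Nat.card {H : AddSubgroup G' // H.index = n} :=
  Nat.card_congr <| e.mapAddSubgroup.toEquiv.subtypeEquiv fun H => by simp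

theorem AddSubgroup.index_eq_index_comap_inr_mul_index_map_fst {G A : Type*} [AddCommGroup G]
    [AddCommGroup A] (H : AddSubgroup (G × A)) :
    H.index = (H.comap (AddMonoidHom.inr G A)).index * (H.map (AddMonoidHom.fst G A)).index := by
  have hker : (AddMonoidHom.inr G A).range = (AddMonoidHom.fst G A).ker := by
    ext ⟨x, a⟩
    simp [eq_comm, AddSubgroup.mem_prod]
  rw [index_comap, hker, ← relIndex_sup_left, index_map,
    (AddMonoidHom.fst G A).range_eq_top_of_surjective Prod.fst_surjective, index_top, mul_one,
    relIndex_mul_index le_sup_left]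

theorem Int.eq_zmultiples_index (J : AddSubgroup ℤ) : J = zmultiples (J.index : ℤ) := by
  obtain ⟨a, rfl⟩ := Int.subgroup_cyclic J
  rw [← zmultiples_eq_closure, Int.index_zmultiples, Int.zmultiples_natAbs]

theorem AddSubgroup.finite_index_eq {A : Type*} [AddCommGroup A] [AddGroup.FG A] {d : ℕ}
    (hd : d ≠ 0) : Finite {K : AddSubgroup A // K.index = d} := by
  let D := (nsmulAddMonoidHom d : A →+ A).range
  have hDle : ∀ K : {K : AddSubgroup A // K.index = d}, D ≤ K.1 := by
    rintro ⟨K, rfl⟩ _ ⟨a, rfl⟩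
    exact K.nsmul_index_mem a
  have : Finite (A ⧸ D) := by
    refine AddCommGroup.finite_of_fg_isAddTorsion _ fun q => ?_
    induction q using QuotientAddGroup.induction_on with
    | H a => exact isOfFinAddOrder_iff_nsmul_eq_zero.mpr ⟨d, Nat.pos_of_ne_zero hd,
        (QuotientAddGroup.eq_zero_iff _).mpr ⟨a, rfl⟩⟩
  refine Finite.of_injective (fun K => K.1.map (QuotientAddGroup.mk' D)) fun K L hKL => ?_
  have hcomap (K : {K : AddSubgroup A // K.index = d}) :
      (K.1.map (QuotientAddGroup.mk' D)).comap (QuotientAddGroup.mk' D) = K.1 := by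
    rw [comap_map_eq, QuotientAddGroup.ker_mk', sup_of_le_left (hDle K)]
  exact Subtype.ext <| (hcomap K).symm.trans <| (congrArg _ hKL).trans (hcomap L)

namespace AddSubgroup

variable {A : Type*} [AddCommGroup A]

/-- The subgroup of `ℤ × A` generated by `0 × K` and `(a, w)`, for any lift `w` of `v`. -/
def ofCoset (a : ℕ) (K : AddSubgroup A) (v : A ⧸ K) : AddSubgroup (ℤ × A) :=
  (zmultiples ((a : ℤ), v)).comap ((AddMonoidHom.id ℤ).prodMap (QuotientAddGroup.mk' K))

variable {a : ℕ} {K : AddSubgroup A} {v : A ⧸ K}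

theorem mem_ofCoset {p : ℤ × A} :
    p ∈ ofCoset a K v ↔ ∃ t : ℤ, t * a = p.1 ∧ t • v = p.2 := by
  simp [ofCoset, mem_zmultiples_iff, Prod.ext_iff]

theorem ofCoset_comap_inr (ha : a ≠ 0) : (ofCoset a K v).comap (AddMonoidHom.inr ℤ A) = K := by
  ext w
  simp [mem_ofCoset, ha, eq_comm (b := (w : A ⧸ K))]

theorem ofCoset_map_fst : (ofCoset a K v).map (AddMonoidHom.fst ℤ A) = zmultiples (a : ℤ) := by
  ext x
  simp only [mem_map, mem_ofCoset, mem_zmultiples_iff, AddMonoidHom.coe_fst, zsmul_eq_mul]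
  constructor
  · rintro ⟨p, ⟨t, ht, -⟩, rfl⟩
    exact ⟨t, ht⟩
  · rintro ⟨t, rfl⟩
    obtain ⟨w, hw⟩ := QuotientAddGroup.mk_surjective (t • v)
    exact ⟨(t * a, w), ⟨t, rfl, hw.symm⟩, rfl⟩

theorem index_ofCoset (ha : a ≠ 0) : (ofCoset a K v).index = K.index * a := by
  rw [index_eq_index_comap_inr_mul_index_map_fst, ofCoset_comap_inr ha, ofCoset_map_fst,
    Int.index_zmultiples, Int.natAbs_natCast]

theorem natCast_mk_mem_ofCoset_iff (ha : a ≠ 0) (w : A) :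
    ((a : ℤ), w) ∈ ofCoset a K v ↔ (w : A ⧸ K) = v := by
  simp [mem_ofCoset, ha, eq_comm]

theorem ofCoset_injective (ha : a ≠ 0) : Function.Injective (ofCoset a K) := by
  intro v v' h
  obtain ⟨w, rfl⟩ := QuotientAddGroup.mk_surjective v
  rw [← natCast_mk_mem_ofCoset_iff ha, ← h, natCast_mk_mem_ofCoset_iff ha]

theorem exists_eq_ofCoset (H : AddSubgroup (ℤ × A)) :
    ∃ v, H = ofCoset (H.map (AddMonoidHom.fst ℤ A)).index (H.comap (AddMonoidHom.inr ℤ A)) v := by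
  set a := (H.map (AddMonoidHom.fst ℤ A)).index
  set K := H.comap (AddMonoidHom.inr ℤ A)
  have hJ := Int.eq_zmultiples_index (H.map (AddMonoidHom.fst ℤ A))
  obtain ⟨p, hpH, hpa⟩ : (a : ℤ) ∈ H.map (AddMonoidHom.fst ℤ A) := hJ ▸ mem_zmultiples _
  have key (q : ℤ × A) (t : ℤ) (hq : t * a = q.1) : q ∈ H ↔ t • (p.2 : A ⧸ K) = q.2 := by
    have hdecomp : q = t • p + AddMonoidHom.inr ℤ A (q.2 - t • p.2) := by
      ext
      · simp [← hq, ← hpa]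
      · simp
    conv_lhs => rw [hdecomp]
    rw [add_mem_cancel_left (zsmul_mem hpH t), ← QuotientAddGroup.mk_zsmul, eq_comm,
      QuotientAddGroup.eq_iff_sub_mem]
    rfl
  refine ⟨p.2, ext fun q => ?_⟩
  rw [mem_ofCoset]
  constructor
  · intro hq
    obtain ⟨t, ht⟩ := mem_zmultiples_iff.mp (hJ ▸ mem_map_of_mem _ hq : q.1 ∈ zmultiples (a : ℤ))
    rw [zsmul_eq_mul] at ht
    exact ⟨t, ht, (key q t ht).mp hq⟩
  · rintro ⟨t, ht, htv⟩
    exact (key q t ht).mpr htv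

def ofCosetSigma (n : ℕ) :
    (Σ d : n.divisors, Σ K : {K : AddSubgroup A // K.index = d}, A ⧸ K.1) →
      {H : AddSubgroup (ℤ × A) // H.index = n} :=
  fun x => ⟨ofCoset (n / (x.1 : ℕ)) x.2.1.1 x.2.2, by
    rw [index_ofCoset (Nat.div_ne_zero_of_mem_divisors x.1.2), x.2.1.2,
      Nat.mul_div_cancel' (Nat.dvd_of_mem_divisors x.1.2)]⟩

theorem ofCosetSigma_injective (n : ℕ) : Function.Injective (ofCosetSigma (A := A) n) := by
  intro ⟨d, K, v⟩ ⟨d', K', v'⟩ h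
  replace h : ofCoset (n / (d : ℕ)) K.1 v = ofCoset (n / (d' : ℕ)) K'.1 v' := congrArg Subtype.val h
  have hK : K.1 = K'.1 := by
    rw [← ofCoset_comap_inr (Nat.div_ne_zero_of_mem_divisors d.2) (v := v),
      ← ofCoset_comap_inr (Nat.div_ne_zero_of_mem_divisors d'.2) (v := v'), h]
  obtain rfl : d = d' := Subtype.ext <| by rw [← K.2, ← K'.2, hK]
  obtain rfl : K = K' := Subtype.ext hK
  obtain rfl : v = v' := ofCoset_injective (Nat.div_ne_zero_of_mem_divisors d.2) h
  rfl

theorem ofCosetSigma_surjective {n : ℕ} (hn : n ≠ 0) :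
    Function.Surjective (ofCosetSigma (A := A) n) := by
  rintro ⟨H, hH⟩
  set a := (H.map (AddMonoidHom.fst ℤ A)).index
  set K := H.comap (AddMonoidHom.inr ℤ A)
  obtain ⟨v, hv⟩ := exists_eq_ofCoset H
  have hna : n = K.index * a := hH ▸ index_eq_index_comap_inr_mul_index_map_fst H
  have hK : K.index ∈ n.divisors := Nat.mem_divisors.mpr ⟨⟨a, hna⟩, hn⟩
  refine ⟨⟨⟨K.index, hK⟩, ⟨K, rfl⟩, v⟩, Subtype.ext ?_⟩
  change ofCoset (n / K.index) K v = H
  rw [hna, Nat.mul_div_cancel_left _ (Nat.pos_of_mem_divisors (hna ▸ hK)), ← hv]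

theorem card_int_prod_index_eq_sum_divisors [AddGroup.FG A] {n : ℕ} (hn : n ≠ 0) :
    Nat.card {H : AddSubgroup (ℤ × A) // H.index = n} =
      ∑ d ∈ n.divisors, d * Nat.card {K : AddSubgroup A // K.index = d} := by
  have (d : n.divisors) : Finite {K : AddSubgroup A // K.index = d} :=
    finite_index_eq (Nat.pos_of_mem_divisors d.2).ne'
  have (d : n.divisors) (K : {K : AddSubgroup A // K.index = d}) : Finite (A ⧸ K.1) :=
    index_ne_zero_iff_finite.mp <| by rw [K.2]; exact (Nat.pos_of_mem_divisors d.2).ne'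
  rw [← Nat.card_congr (Equiv.ofBijective _ ⟨ofCosetSigma_injective n, ofCosetSigma_surjective hn⟩),
    Nat.card_sigma, ← Finset.sum_coe_sort n.divisors]
  refine Fintype.sum_congr _ _ fun d => ?_
  have := Fintype.ofFinite {K : AddSubgroup A // K.index = d}
  rw [Nat.card_sigma, Finset.sum_congr rfl fun K _ => K.1.index_eq_card.symm.trans K.2,
    Finset.sum_const, Finset.card_univ, ← Nat.card_eq_fintype_card, smul_eq_mul, mul_comm]

end AddSubgroup

theorem g_recursion (ℓ n : ℕ) (hℓ : 1 ≤ ℓ) (hn : 1 ≤ n) :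
    g ℓ n = ∑ d ∈ n.divisors, d * g (ℓ - 1) d := by
  obtain ⟨k, rfl⟩ := Nat.exists_eq_add_of_le' hℓ
  rw [Nat.add_sub_cancel, g,
    (Fin.consLinearEquiv ℤ fun _ => ℤ).toAddEquiv.symm.card_addSubgroup_index_eq,
    AddSubgroup.card_int_prod_index_eq_sum_divisors (Nat.one_le_iff_ne_zero.mp hn)]
  rfl
end

section
/- For all ℓ ≥ 1, N_ℓ(4) = (7/6)·4^{ℓ-1} + (1/2)·3^{ℓ-1} - (1/2)·2^{ℓ-1} - 1/6. -/
namespace NFour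

abbrev G4 := Equiv.Perm (Fin 4)
open Equiv Finset

def sw (a b : Fin 4) : G4 := Equiv.swap a b
def d1 : G4 := sw 0 1 * sw 2 3
def d2 : G4 := sw 0 2 * sw 1 3
def d3 : G4 := sw 0 3 * sw 1 2
def f1 : G4 := sw 0 3 * sw 0 1 * sw 0 2
def f2 : G4 := sw 0 3 * sw 0 2 * sw 0 1
def f3 : G4 := sw 0 2 * sw 0 3 * sw 0 1
def u1 : G4 := sw 1 3 * sw 1 2
def u2 : G4 := sw 0 3 * sw 0 2
def u3 : G4 := sw 0 3 * sw 0 1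
def u4 : G4 := sw 0 2 * sw 0 1

def A : Fin 11 → Finset G4
| 0 => {1, d1, d2, d3}
| 1 => {1, sw 0 1, sw 2 3, d1}
| 2 => {1, sw 0 2, sw 1 3, d2}
| 3 => {1, sw 0 3, sw 1 2, d3}
| 4 => {1, f1, d1, f1⁻¹}
| 5 => {1, f2, d2, f2⁻¹}
| 6 => {1, f3, d3, f3⁻¹}
| 7 => {1, u1, u1⁻¹}
| 8 => {1, u2, u2⁻¹}
| 9 => {1, u3, u3⁻¹}
| 10 => {1, u4, u4⁻¹}

def B : Fin 11 → Finset G4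
| 0 => ∅
| 1 => {1, d1}
| 2 => {1, d2}
| 3 => {1, d3}
| 4 => {1, d1}
| 5 => {1, d2}
| 6 => {1, d3}
| _ => {1}

lemma abelianA : ∀ t : Fin 11, ∀ a ∈ A t, ∀ b ∈ A t, a * b = b * a := by decide
lemma B_subset_A : ∀ t : Fin 11, B t ⊆ A t := by decide
lemma cardA : ∀ t : Fin 11, (A t).card = ![4,4,4,4,4,4,4,3,3,3,3] t := by decide
lemma cardB : ∀ t : Fin 11, (B t).card = ![0,2,2,2,2,2,2,1,1,1,1] t := by decide
lemma key : ∀ g : G4, g ∉ A 0 →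
    ∃ t : Fin 11, (∀ h : G4, h * g = g * h → h ∈ A t) ∧ g ∉ B t := by decide
instance instDecCommute (n : ℕ) : DecidablePred (fun π : Fin n → G4 => ∀ i j, Commute (π i) (π j)) :=
  fun π => decidable_of_iff (∀ i j, π i * π j = π j * π i) Iff.rfl

lemma inter_sub : ∀ s t : Fin 11, s ≠ t → (A s ∩ A t ⊆ B s) ∨ (A s ∩ A t ⊆ B t) := by decide

variable (ℓ : ℕ)

def piece (t : Fin 11) : Finset (Fin ℓ → G4) :=
  Fintype.piFinset (fun _ => A t) \ Fintype.piFinset (fun _ => B t)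

lemma mem_piece {π : Fin ℓ → G4} {t : Fin 11} :
    π ∈ piece ℓ t ↔ (∀ i, π i ∈ A t) ∧ ¬ (∀ i, π i ∈ B t) := by
  simp [piece, Fintype.mem_piFinset]

lemma piece_disjoint {s t : Fin 11} (hst : s ≠ t) : Disjoint (piece ℓ s) (piece ℓ t) := by
  rw [Finset.disjoint_left]
  intro π hs ht
  rw [mem_piece] at hs ht
  rcases inter_sub s t hst with h | h
  · exact hs.2 fun i => h (Finset.mem_inter.2 ⟨hs.1 i, ht.1 i⟩)
  · exact ht.2 fun i => h (Finset.mem_inter.2 ⟨hs.1 i, ht.1 i⟩)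

lemma card_piece (t : Fin 11) : (piece ℓ t).card = (A t).card ^ ℓ - (B t).card ^ ℓ := by
  rw [piece, Finset.card_sdiff_of_subset]
  · rw [Fintype.card_piFinset, Fintype.card_piFinset]
    simp
  · intro π hπ
    rw [Fintype.mem_piFinset] at hπ ⊢
    exact fun i => B_subset_A t (hπ i)

lemma cover (hℓ : 1 ≤ ℓ) (π : Fin ℓ → G4) (h : ∀ i j, Commute (π i) (π j)) :
    ∃ t, π ∈ piece ℓ t := by
  by_cases hV : ∀ i, π i ∈ A 0
  · refine ⟨0, (mem_piece ℓ).2 ⟨hV, fun hall => ?_⟩⟩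
    simpa [B] using hall ⟨0, hℓ⟩
  · push_neg at hV
    obtain ⟨i0, hi0⟩ := hV
    obtain ⟨t, hA, hB⟩ := key (π i0) hi0
    exact ⟨t, (mem_piece ℓ).2 ⟨fun i => hA (π i) (h i i0), fun hall => hB (hall i0)⟩⟩

lemma count (hℓ : 1 ≤ ℓ) :
    (Finset.univ.filter (fun π : Fin ℓ → G4 => ∀ i j, Commute (π i) (π j))).card
      = 7 * 4 ^ ℓ + 4 * 3 ^ ℓ - 6 * 2 ^ ℓ - 4 := by
  have hU : (Finset.univ.filter (fun π : Fin ℓ → G4 => ∀ i j, Commute (π i) (π j)))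
      = Finset.univ.biUnion (piece ℓ) := by
    ext π
    rw [Finset.mem_filter, Finset.mem_biUnion]
    constructor
    · intro h
      obtain ⟨t, ht⟩ := cover ℓ hℓ π h.2
      exact ⟨t, Finset.mem_univ t, ht⟩
    · rintro ⟨t, -, hmem⟩
      refine ⟨Finset.mem_univ π, fun i j => ?_⟩
      have := ((mem_piece ℓ).1 hmem).1
      exact abelianA t _ (this i) _ (this j)
  rw [hU, Finset.card_biUnion (fun s _ t _ hst => piece_disjoint ℓ hst)]
  have : ∑ t : Fin 11, (piece ℓ t).card
      = ∑ t : Fin 11, ((![4,4,4,4,4,4,4,3,3,3,3] t : ℕ) ^ ℓ - (![0,2,2,2,2,2,2,1,1,1,1] t : ℕ) ^ ℓ) := by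
    refine Finset.sum_congr rfl fun t _ => ?_
    rw [card_piece, cardA, cardB]
  rw [this]
  simp only [Fin.sum_univ_succ, Finset.univ_unique, Fin.default_eq_zero, Finset.sum_singleton]
  simp only [Matrix.cons_val_zero, Matrix.cons_val_succ, Matrix.cons_val_fin_one]
  have h0 : (0:ℕ) ^ ℓ = 0 := zero_pow (by omega)
  have h1 : (1:ℕ) ^ ℓ = 1 := one_pow ℓ
  have h24 : 2 ^ ℓ ≤ 4 ^ ℓ := Nat.pow_le_pow_left (by norm_num) ℓ
  have h13 : 1 ≤ 3 ^ ℓ := Nat.one_le_pow ℓ 3 (by norm_num)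
  rw [h0, h1]
  omega

end NFour

theorem N_four (ℓ : ℕ) (hℓ : 1 ≤ ℓ) :
    N ℓ 4 = (7 / 6) * 4 ^ (ℓ - 1) + (1 / 2) * 3 ^ (ℓ - 1) - (1 / 2) * 2 ^ (ℓ - 1) - 1 / 6 := by
  have hcard : Nat.card {π : Fin ℓ → Equiv.Perm (Fin 4) // ∀ i j, Commute (π i) (π j)}
      = 7 * 4 ^ ℓ + 4 * 3 ^ ℓ - 6 * 2 ^ ℓ - 4 := by
    rw [Nat.card_eq_fintype_card, Fintype.card_subtype]
    exact NFour.count ℓ hℓ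
  obtain ⟨m, rfl⟩ : ∃ m, ℓ = m + 1 := ⟨ℓ - 1, (Nat.succ_pred_eq_of_pos hℓ).symm⟩
  rw [N, hcard]
  clear hcard
  have h24 : (2:ℕ) ^ (m+1) ≤ 4 ^ (m+1) := Nat.pow_le_pow_left (by norm_num) _
  have h3 : (3:ℕ) ≤ 3 ^ (m+1) := by
    calc (3:ℕ) = 3 ^ 1 := by norm_num
    _ ≤ 3 ^ (m+1) := Nat.pow_le_pow_right (by norm_num) (by omega)
  have h13 : (4:ℕ) ≤ 7 * 4 ^ (m+1) + 4 * 3 ^ (m+1) - 6 * 2 ^ (m+1) := by omega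
  have h2 : (6:ℕ) * 2 ^ (m+1) ≤ 7 * 4 ^ (m+1) + 4 * 3 ^ (m+1) := by omega
  push_cast [Nat.cast_sub h13, Nat.cast_sub h2]
  show _ / ((4:ℕ).factorial : ℚ) = _
  norm_num [Nat.factorial]
  field_simp
  ring
end

section
/- The sequence L(ℓ), defined as the smallest number such that N_ℓ(a)·N_ℓ(b) - N_ℓ(a+b) > 0 for all a, b ≥ L(ℓ), is unbounded as ℓ → ∞. -/
open Equiv MulAction Filter

/-- The largest product of the parts of a partition of `n`: for `n ≥ 2` take parts `3`, with one
part `2` if `n ≡ 2 [MOD 3]` and one part `4` if `n ≡ 1 [MOD 3]`. -/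
def maxPartProd : ℕ → ℕ
  | 0 => 1
  | 1 => 1
  | 2 => 2
  | 3 => 3
  | 4 => 4
  | n + 5 => 3 * maxPartProd (n + 2)

lemma maxPartProd_le_succ : ∀ n, maxPartProd n ≤ maxPartProd (n + 1)
  | 0 | 1 | 2 | 3 | 4 => by decide
  | n + 5 => Nat.mul_le_mul_left 3 (maxPartProd_le_succ (n + 2))

lemma two_mul_maxPartProd_le : ∀ n, 2 * maxPartProd n ≤ maxPartProd (n + 2)
  | 0 | 1 | 2 | 3 | 4 => by decide
  | n + 5 => by
    have : 2 * maxPartProd (n + 2) ≤ maxPartProd (n + 4) := two_mul_maxPartProd_le (n + 2)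
    change 2 * (3 * _) ≤ 3 * maxPartProd (n + 4)
    omega

lemma three_mul_maxPartProd_le : ∀ n, 3 * maxPartProd n ≤ maxPartProd (n + 3)
  | 0 | 1 => by decide
  | _ + 2 => le_rfl

lemma mul_maxPartProd_le {k : ℕ} (hk : 1 ≤ k) (n : ℕ) :
    k * maxPartProd n ≤ maxPartProd (n + k) := by
  induction k using Nat.strong_induction_on with
  | _ k ih =>
    match k, hk with
    | 1, _ => simpa using maxPartProd_le_succ n
    | 2, _ => exact two_mul_maxPartProd_le n
    | 3, _ => exact three_mul_maxPartProd_le n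
    | k + 4, _ =>
      calc (k + 4) * maxPartProd n ≤ 2 * ((k + 2) * maxPartProd n) := by nlinarith
        _ ≤ 2 * maxPartProd (n + (k + 2)) :=
          Nat.mul_le_mul_left 2 (ih (k + 2) (by omega) (by omega))
        _ ≤ maxPartProd (n + (k + 4)) := two_mul_maxPartProd_le _

lemma prod_le_maxPartProd_sum {ι : Type*} (s : Finset ι) (x : ι → ℕ) (hx : ∀ i ∈ s, 1 ≤ x i) :
    ∏ i ∈ s, x i ≤ maxPartProd (∑ i ∈ s, x i) := by
  classical
  induction s using Finset.induction_on with
  | empty => simp [maxPartProd]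
  | insert i s hi ih =>
    rw [Finset.prod_insert hi, Finset.sum_insert hi, add_comm]
    calc x i * ∏ j ∈ s, x j ≤ x i * maxPartProd (∑ j ∈ s, x j) :=
          Nat.mul_le_mul_left _ (ih fun j hj => hx j (Finset.mem_insert_of_mem hj))
      _ ≤ _ := mul_maxPartProd_le (hx i (Finset.mem_insert_self i s)) _

lemma maxPartProd_three_mul_add_four (q : ℕ) : maxPartProd (3 * q + 4) = 4 * 3 ^ q := by
  induction q with
  | zero => rfl
  | succ q ih =>
    change 3 * maxPartProd (3 * q + 4) = _
    rw [ih, pow_succ]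
    ring

section CommutativeAction

open scoped IsMulCommutative

variable {G α : Type*} [Group G] [IsMulCommutative G] [MulAction G α]

lemma smul_eq_smul_of_mem_orbit {g h : G} {x y : α} (hy : y ∈ orbit G x) (hgh : g • x = h • x) :
    g • y = h • y := by
  obtain ⟨k, rfl⟩ := hy
  rw [smul_smul, mul_comm, mul_smul, hgh, ← mul_smul, mul_comm, mul_smul]

lemma injective_smul_orbitRel_out [FaithfulSMul G α] :
    Function.Injective fun (g : G) (ω : orbitRel.Quotient G α) =>
      (⟨g • ω.out, mem_orbit _ g⟩ : orbit G ω.out) := by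
  intro g h hgh
  refine FaithfulSMul.eq_of_smul_eq_smul (α := α) fun x => ?_
  have hx : x ∈ orbit G (⟦x⟧ : orbitRel.Quotient G α).out :=
    orbitRel.Quotient.mem_orbit.mpr (Quotient.out_eq _).symm
  exact smul_eq_smul_of_mem_orbit hx (congrArg Subtype.val (congrFun hgh ⟦x⟧))

lemma card_le_maxPartProd_card [FaithfulSMul G α] [Finite α] :
    Nat.card G ≤ maxPartProd (Nat.card α) := by
  have : Fintype (orbitRel.Quotient G α) := Fintype.ofFinite _
  have hsum : ∑ ω : orbitRel.Quotient G α, Nat.card (orbit G ω.out) = Nat.card α := by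
    rw [← Nat.card_sigma, Nat.card_congr (selfEquivSigmaOrbits G α)]
  calc Nat.card G ≤ Nat.card ((ω : orbitRel.Quotient G α) → orbit G ω.out) :=
        Nat.card_le_card_of_injective _ injective_smul_orbitRel_out
    _ = ∏ ω : orbitRel.Quotient G α, Nat.card (orbit G ω.out) := Nat.card_pi
    _ ≤ maxPartProd (Nat.card α) :=
        hsum ▸ prod_le_maxPartProd_sum _ _ fun ω _ =>
          have : Nonempty (orbit G ω.out) := ⟨⟨_, mem_orbit_self _⟩⟩
          Nat.card_pos

end CommutativeAction

/-- Commuting `ι`-tuples in `G`, i.e. homomorphisms `ℤ^ι → G`. -/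
abbrev CommutingTuples (ι G : Type*) [Mul G] : Type _ := {π : ι → G // ∀ i j, Commute (π i) (π j)}

section Counting

variable {ι G : Type*} [Finite ι] [Group G] [Finite G]

/-- Every commuting tuple lies in the commutative subgroup it generates. -/
lemma card_commutingTuples_le (M : ℕ)
    (hM : ∀ H : Subgroup G, IsMulCommutative H → Nat.card H ≤ M) :
    Nat.card (CommutingTuples ι G) ≤ Nat.card (Subgroup G) * M ^ Nat.card ι := by
  have : Fintype {H : Subgroup G // IsMulCommutative H} := Fintype.ofFinite _
  let gen : CommutingTuples ι G → Σ H : {H : Subgroup G // IsMulCommutative H}, ι → H.1 :=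
    fun π => ⟨⟨Subgroup.closure (Set.range π.1), Subgroup.isMulCommutative_closure <| by
      rintro _ ⟨i, rfl⟩ _ ⟨j, rfl⟩; exact π.2 i j⟩,
      fun i => ⟨π.1 i, Subgroup.subset_closure ⟨i, rfl⟩⟩⟩
  have hgen : Function.Injective gen := fun π ρ h =>
    Subtype.ext (congrArg (fun s i => (s.2 i : G)) h)
  calc Nat.card (CommutingTuples ι G)
      ≤ ∑ H : {H : Subgroup G // IsMulCommutative H}, Nat.card H.1 ^ Nat.card ι := by
        simpa only [Nat.card_sigma, Nat.card_fun] using Nat.card_le_card_of_injective gen hgen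
    _ ≤ ∑ _H : {H : Subgroup G // IsMulCommutative H}, M ^ Nat.card ι :=
        Finset.sum_le_sum fun H _ => Nat.pow_le_pow_left (hM H.1 H.2) _
    _ ≤ Nat.card (Subgroup G) * M ^ Nat.card ι := by
        rw [Finset.sum_const, smul_eq_mul, Finset.card_univ, ← Nat.card_eq_fintype_card]
        exact Nat.mul_le_mul_right _ (Finite.card_subtype_le _)

lemma pow_card_le_card_commutingTuples {A : Type*} (θ : A → G) (hθ : Function.Injective θ)
    (hcomm : ∀ a b, Commute (θ a) (θ b)) :
    Nat.card A ^ Nat.card ι ≤ Nat.card (CommutingTuples ι G) := by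
  have : Finite A := Finite.of_injective θ hθ
  rw [← Nat.card_fun]
  exact Nat.card_le_card_of_injective (fun v => ⟨θ ∘ v, fun i j => hcomm _ _⟩)
    fun v w h => funext fun i => hθ (congrFun (congrArg Subtype.val h) i)

end Counting

/-- Translations of `ZMod 2 × (ZMod 3)^m` acting on a 2-cycle and `m` 3-cycles. -/
def translationPerm (m : ℕ) (g : ZMod 2 × (Fin m → ZMod 3)) : Perm (ZMod 2 ⊕ ZMod 3 × Fin m) :=
  sumCongr (Equiv.addLeft g.1) (prodCongrLeft fun i => Equiv.addLeft (g.2 i))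

lemma translationPerm_commute (m : ℕ) (g h : ZMod 2 × (Fin m → ZMod 3)) :
    Commute (translationPerm m g) (translationPerm m h) := by
  ext (a | ⟨a, i⟩) <;> simp [translationPerm] <;> abel

lemma translationPerm_injective (m : ℕ) : Function.Injective (translationPerm m) := by
  intro g h hgh
  have h₁ := congrArg (· (Sum.inl 0)) hgh
  have h₂ := fun i => congrArg (· (Sum.inr (0, i))) hgh
  simp only [translationPerm, sumCongr_apply, Sum.map_inl, Sum.map_inr, coe_addLeft,
    prodCongrLeft_apply, add_zero, Sum.inl.injEq, Sum.inr.injEq, Prod.mk.injEq] at h₁ h₂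
  exact Prod.ext h₁ (funext fun i => (h₂ i).1)

lemma card_commutingTuples_perm_le (ι : Type*) [Finite ι] (n : ℕ) :
    Nat.card (CommutingTuples ι (Perm (Fin n))) ≤
      Nat.card (Subgroup (Perm (Fin n))) * maxPartProd n ^ Nat.card ι :=
  card_commutingTuples_le _ fun H _ => by
    simpa using card_le_maxPartProd_card (G := H) (α := Fin n)

lemma pow_le_card_commutingTuples_perm (ι : Type*) [Finite ι] (m : ℕ) :
    (2 * 3 ^ m) ^ Nat.card ι ≤ Nat.card (CommutingTuples ι (Perm (Fin (3 * m + 2)))) := by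
  obtain e : ZMod 2 ⊕ ZMod 3 × Fin m ≃ Fin (3 * m + 2) :=
    Fintype.equivFinOfCardEq (by simp; ring)
  simpa [Nat.card_eq_fintype_card] using pow_card_le_card_commutingTuples (ι := ι)
    (e.permCongrHom ∘ translationPerm m)
    (e.permCongrHom.injective.comp (translationPerm_injective m))
    fun g h => (translationPerm_commute m g h).map e.permCongrHom

lemma N_le_div_factorial (ℓ n : ℕ) :
    N ℓ n ≤ (Nat.card (Subgroup (Perm (Fin n))) * maxPartProd n ^ ℓ : ℕ) / n.factorial := by
  have h := card_commutingTuples_perm_le (Fin ℓ) n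
  rw [Nat.card_fin] at h
  exact div_le_div_of_nonneg_right (by exact_mod_cast h) (Nat.cast_nonneg _)

lemma div_factorial_le_N (ℓ m : ℕ) :
    ((2 * 3 ^ m) ^ ℓ : ℕ) / (3 * m + 2).factorial ≤ N ℓ (3 * m + 2) := by
  have h := pow_le_card_commutingTuples_perm (Fin ℓ) m
  rw [Nat.card_fin] at h
  exact div_le_div_of_nonneg_right (by exact_mod_cast h) (Nat.cast_nonneg _)

/-- For `a = 3 * q + 4`, `N ℓ a ^ 2` grows like `(16 * 9 ^ q) ^ ℓ` while `N ℓ (2 * a)` grows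
like `(18 * 9 ^ q) ^ ℓ`. -/
lemma eventually_N_mul_N_le (q : ℕ) :
    ∀ᶠ ℓ in atTop, N ℓ (3 * q + 4) * N ℓ (3 * q + 4) ≤ N ℓ ((3 * q + 4) + (3 * q + 4)) := by
  set K := (Nat.card (Subgroup (Perm (Fin (3 * q + 4)))) : ℚ)
  set F := (((3 * q + 4) + (3 * q + 4)).factorial : ℚ)
  set X : ℚ := 4 * 3 ^ q with hX_def
  have hF : 0 < F := by positivity
  have hX : X * X * (9 / 8) = 2 * 3 ^ (2 * q + 2) := by
    rw [hX_def, pow_add, pow_mul']; ring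
  have hX0 : 0 ≤ X := by positivity
  clear_value X
  filter_upwards [(tendsto_pow_atTop_atTop_of_one_lt (by norm_num : (1 : ℚ) < 9 / 8))
    |>.eventually_ge_atTop (K ^ 2 * F)] with ℓ hℓ
  have hup : N ℓ (3 * q + 4) ≤ K * X ^ ℓ := by
    have h := N_le_div_factorial ℓ (3 * q + 4)
    rw [maxPartProd_three_mul_add_four] at h
    push_cast [← hX_def] at h
    exact h.trans (div_le_self (by positivity) (by exact_mod_cast (3 * q + 4).factorial_pos))
  have hlo : (2 * 3 ^ (2 * q + 2)) ^ ℓ / F ≤ N ℓ ((3 * q + 4) + (3 * q + 4)) := by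
    have h := div_factorial_le_N ℓ (2 * q + 2)
    rw [show 3 * (2 * q + 2) + 2 = (3 * q + 4) + (3 * q + 4) by ring] at h
    exact_mod_cast h
  have hN : 0 ≤ N ℓ (3 * q + 4) := by unfold N; positivity
  calc N ℓ (3 * q + 4) * N ℓ (3 * q + 4) ≤ (K * X ^ ℓ) * (K * X ^ ℓ) :=
        mul_le_mul hup hup hN (hN.trans hup)
    _ = K ^ 2 * (X * X) ^ ℓ := by ring
    _ ≤ (X * X) ^ ℓ * (9 / 8) ^ ℓ / F := by
        rw [le_div_iff₀ hF]
        nlinarith [pow_nonneg (mul_self_nonneg X) ℓ]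
    _ = (2 * 3 ^ (2 * q + 2)) ^ ℓ / F := by rw [← mul_pow, hX]
    _ ≤ _ := hlo

/-- The minimal bound L(ℓ) with Δ_{a,b}^ℓ > 0 for all a, b ≥ L(ℓ) is unbounded in ℓ:
for every C there is an ℓ ≥ 2 such that every valid bound L for that ℓ exceeds C. -/
theorem L_unbounded :
    ∀ C : ℕ, ∃ ℓ : ℕ, 2 ≤ ℓ ∧
      ∀ L : ℕ, (∀ a b : ℕ, L ≤ a → L ≤ b → N ℓ a * N ℓ b - N ℓ (a + b) > 0) → C < L := by
  intro C
  obtain ⟨ℓ, hℓ, hΔ⟩ := ((eventually_ge_atTop 2).and (eventually_N_mul_N_le C)).exists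
  refine ⟨ℓ, hℓ, fun L hL => ?_⟩
  by_contra! hLC
  have := hL (3 * C + 4) (3 * C + 4) (by omega) (by omega)
  linarith
end

section
/- For fixed a, b ≥ 2 with a ≡ b ≡ 0 (mod 3), the ratio N_ℓ(a)·N_ℓ(b)/N_ℓ(a+b) converges to the binomial coefficient C((a+b)/3, a/3) as ℓ → ∞; in particular Δ^ℓ_{a,b} > 0 for all sufficiently large ℓ whenever (a,b) ≠ (3,3) is such that C((a+b)/3, a/3) > 1 (which always holds for a,b ≥ 3). -/
/-!
Splitting off the orbit of a point under the group generated by a commuting tuple gives the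
recursion `c(n+1) = ∑_{S ∋ 0} t(#S) c(n+1-#S)`, where `c(k)` counts commuting `ℓ`-tuples in `S_k`
and `t(k)` those of them that generate a transitive group. A transitive abelian permutation group
is regular, so `t(k) = O(k^ℓ)`, which is `o(3^{k(ℓ-1)/3})` for `k ≠ 3` since `k < 3^{k/3}`; for
`k = 3` the transitive commuting tuples are the nontrivial tuples in `A₃`, so `t(3) ~ 3^ℓ`. Hence,
after dividing by `n! 3^{n(ℓ-1)/3}`, only blocks of size 3 survive as `ℓ → ∞`, and by induction
`N_ℓ(n) / 3^{n(ℓ-1)/3}` tends to `1 / (2^{n/3} (n/3)!)` if `3 ∣ n` and to `0` otherwise. The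
quotient of these limits for `a`, `b` and `a + b` is the binomial coefficient, which is at least 2
when `a, b ≥ 3`.
-/

open Equiv Filter Topology Finset
open scoped Nat

namespace CommutingPerms

variable {ℓ : ℕ} {G H : Type*} [Group G] [Group H]

def IsCommuting (π : Fin ℓ → G) : Prop := ∀ i j, Commute (π i) (π j)

abbrev gen (π : Fin ℓ → G) : Subgroup G := Subgroup.closure (Set.range π)

lemma mem_gen (π : Fin ℓ → G) (i : Fin ℓ) : π i ∈ gen π :=
  Subgroup.subset_closure (Set.mem_range_self i)

lemma gen_comp (f : G →* H) (π : Fin ℓ → G) : gen (f ∘ π) = (gen π).map f := by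
  rw [gen, gen, MonoidHom.map_closure, Set.range_comp]

lemma isCommuting_comp_iff {f : G →* H} (hf : Function.Injective f) {π : Fin ℓ → G} :
    IsCommuting (f ∘ π) ↔ IsCommuting π :=
  forall₂_congr fun i j => by
    simp only [Function.comp_apply, Commute, SemiconjBy, ← map_mul, hf.eq_iff]

lemma isCommuting_prod_iff {π : Fin ℓ → G × H} :
    IsCommuting π ↔ IsCommuting (Prod.fst ∘ π) ∧ IsCommuting (Prod.snd ∘ π) := by
  simp only [IsCommuting, Prod.commute_iff, Function.comp_apply]
  exact ⟨fun h => ⟨fun i j => (h i j).1, fun i j => (h i j).2⟩,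
    fun h i j => ⟨h.1 i j, h.2 i j⟩⟩

lemma IsCommuting.commute_of_mem_gen {π : Fin ℓ → G} (hπ : IsCommuting π) {g h : G}
    (hg : g ∈ gen π) (hh : h ∈ gen π) : Commute g h := by
  have := Subgroup.isMulCommutative_closure (k := Set.range π) (by
    rintro _ ⟨i, rfl⟩ _ ⟨j, rfl⟩; exact hπ i j)
  exact congrArg Subtype.val (this.is_comm.comm ⟨g, hg⟩ ⟨h, hh⟩)

variable {α β : Type*}

abbrev IsTransitive (π : Fin ℓ → Perm α) : Prop := MulAction.IsPretransitive (gen π) α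

lemma isTransitive_iff_base {π : Fin ℓ → Perm α} (x : α) :
    IsTransitive π ↔ ∀ y, ∃ g ∈ gen π, g x = y := by
  rw [IsTransitive, MulAction.isPretransitive_iff_base x]
  simp only [Subtype.exists, Subgroup.mk_smul, Perm.smul_def, exists_prop]

lemma IsTransitive.permCongr {π : Fin ℓ → Perm α} (hπ : IsTransitive π) (e : α ≃ β) :
    IsTransitive (e.permCongrHom.toMonoidHom ∘ π) := by
  refine ⟨fun x y => ?_⟩
  obtain ⟨g, hg⟩ := hπ.exists_smul_eq (e.symm x) (e.symm y)
  refine ⟨⟨e.permCongr g, ?_⟩, ?_⟩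
  · rw [gen_comp]
    exact Subgroup.mem_map_of_mem _ g.2
  · change e ((g : Perm α) (e.symm x)) = y
    change (g : Perm α) (e.symm x) = e.symm y at hg
    rw [hg, apply_symm_apply]

lemma IsCommuting.card_gen [Finite α] {π : Fin ℓ → Perm α} (hc : IsCommuting π)
    (ht : IsTransitive π) (x : α) : Nat.card (gen π) = Nat.card α := by
  refine Nat.card_congr (Equiv.ofBijective (fun g : gen π => g • x) ⟨?_, ?_⟩)
  · intro g g' hgg'
    ext y
    obtain ⟨h, rfl⟩ := ht.exists_smul_eq x y
    change (g : Perm α) (h • x) = (g' : Perm α) (h • x)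
    have key (k : gen π) : (k : Perm α) (h • x) = h • k • x :=
      DFunLike.congr_fun (hc.commute_of_mem_gen k.2 h.2).eq x
    rw [key, key]
    exact congrArg (h • ·) hgg'
  · exact ht.exists_smul_eq x

lemma isTransitive_permCongr_iff (e : α ≃ β) {π : Fin ℓ → Perm α} :
    IsTransitive (e.permCongrHom.toMonoidHom ∘ π) ↔ IsTransitive π :=
  ⟨fun h => by simpa [Function.comp_def, ← permCongr_symm] using h.permCongr e.symm,
    fun h => h.permCongr e⟩

variable (ℓ α) in
noncomputable def commCount : ℕ := Nat.card {π : Fin ℓ → Perm α // IsCommuting π}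

variable (ℓ α) in
noncomputable def transCount : ℕ :=
  Nat.card {π : Fin ℓ → Perm α // IsCommuting π ∧ IsTransitive π}

lemma commCount_congr (e : α ≃ β) : commCount ℓ α = commCount ℓ β :=
  Nat.card_congr <| (piCongrRight fun _ => e.permCongrHom.toEquiv).subtypeEquiv fun _ =>
    (isCommuting_comp_iff (f := e.permCongrHom.toMonoidHom) e.permCongrHom.injective).symm

lemma transCount_congr (e : α ≃ β) : transCount ℓ α = transCount ℓ β :=
  Nat.card_congr <| (piCongrRight fun _ => e.permCongrHom.toEquiv).subtypeEquiv fun _ =>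
    ((isCommuting_comp_iff (f := e.permCongrHom.toMonoidHom) e.permCongrHom.injective).and
      (isTransitive_permCongr_iff e)).symm

lemma mem_range_subtypeCongrHom {p : α → Prop} [DecidablePred p] {g : Perm α}
    (hg : ∀ y, p (g y) ↔ p y) : g ∈ (Perm.subtypeCongrHom p).range := by
  refine ⟨(g.subtypePerm hg, g.subtypePerm fun y => not_congr (hg y)), ?_⟩
  ext y
  by_cases hy : p y
  · simp [Perm.subtypeCongr.left_apply _ _ hy]
  · simp [Perm.subtypeCongr.right_apply _ _ hy]

section Decomposition

variable [Fintype α]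

open scoped Classical in
noncomputable def orbit (π : Fin ℓ → Perm α) (x : α) : Finset α :=
  (MulAction.orbit (gen π) x).toFinset

lemma coe_orbit (π : Fin ℓ → Perm α) (x : α) :
    (orbit π x : Set α) = MulAction.orbit (gen π) x := by
  simp [orbit]

lemma mem_orbit_self (π : Fin ℓ → Perm α) (x : α) : x ∈ orbit π x := by
  simp [orbit, MulAction.mem_orbit_self]

lemma apply_mem_orbit_iff (π : Fin ℓ → Perm α) (x y : α) (i : Fin ℓ) :
    π i y ∈ orbit π x ↔ y ∈ orbit π x := by
  simp only [← Finset.mem_coe, coe_orbit]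
  change (⟨π i, mem_gen π i⟩ : gen π) • y ∈ _ ↔ _
  rw [← MulAction.orbit_eq_iff, MulAction.orbit_smul, MulAction.orbit_eq_iff]

lemma mem_orbit_iff {π : Fin ℓ → Perm α} {x y : α} : y ∈ orbit π x ↔ ∃ g ∈ gen π, g x = y := by
  simp only [orbit, Set.mem_toFinset, MulAction.mem_orbit_iff, Subtype.exists, Subgroup.mk_smul,
    Perm.smul_def, exists_prop]

variable [DecidableEq α]

lemma orbit_subtypeCongrHom_eq_iff {S : Finset α} {x : α} (hx : x ∈ S)
    (ρ : Fin ℓ → Perm S × Perm {a // a ∉ S}) :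
    orbit (Perm.subtypeCongrHom (· ∈ S) ∘ ρ) x = S ↔ IsTransitive (Prod.fst ∘ ρ) := by
  have hglue (h : Perm S × Perm {a // a ∉ S}) :
      Perm.subtypeCongrHom (· ∈ S) h x = h.1 ⟨x, hx⟩ := Perm.subtypeCongr.left_apply _ _ hx
  rw [isTransitive_iff_base ⟨x, hx⟩, show Prod.fst ∘ ρ = MonoidHom.fst _ _ ∘ ρ from rfl,
    gen_comp]
  simp only [Finset.ext_iff, mem_orbit_iff, gen_comp, Subgroup.mem_map, exists_exists_and_eq_and,
    hglue]
  constructor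
  · intro h ⟨y, hy⟩
    obtain ⟨g, hg, hgy⟩ := (h y).2 hy
    exact ⟨g, hg, Subtype.ext hgy⟩
  · intro h y
    refine ⟨fun ⟨g, _, hgy⟩ => hgy ▸ (g.1 ⟨x, hx⟩).2, fun hy => ?_⟩
    obtain ⟨g, hg, hgy⟩ := h ⟨y, hy⟩
    exact ⟨g, hg, congrArg Subtype.val hgy⟩

lemma card_commuting_orbit_eq {S : Finset α} {x : α} (hx : x ∈ S) :
    Nat.card {π : Fin ℓ → Perm α // IsCommuting π ∧ orbit π x = S} =
      transCount ℓ S * commCount ℓ {a // a ∉ S} := by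
  set glue := Perm.subtypeCongrHom (· ∈ S)
  have hglue : Function.Injective glue := Perm.subtypeCongrHom_injective _
  -- a tuple with orbit `S` preserves `S`, so it is glued from tuples on `S` and on its complement
  have lift : Nat.card {ρ : Fin ℓ → Perm S × Perm {a // a ∉ S} //
      IsCommuting (glue ∘ ρ) ∧ orbit (glue ∘ ρ) x = S} =
      Nat.card {π : Fin ℓ → Perm α // IsCommuting π ∧ orbit π x = S} := by
    refine Nat.card_congr (Equiv.ofBijective (fun ρ => ⟨glue ∘ ρ.1, ρ.2⟩) ⟨?_, ?_⟩)
    · intro ρ ρ' h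
      exact Subtype.ext (funext fun i => hglue (congrFun (congrArg Subtype.val h) i))
    · rintro ⟨π, hπ⟩
      choose ρ hρ using fun i => mem_range_subtypeCongrHom (p := (· ∈ S)) (g := π i) fun y => by
        rw [← hπ.2]
        exact apply_mem_orbit_iff π x y i
      obtain rfl : glue ∘ ρ = π := funext hρ
      exact ⟨⟨ρ, hπ⟩, rfl⟩
  rw [← lift, transCount, commCount, ← Nat.card_prod]
  refine Nat.card_congr <|
    ((arrowProdEquivProdArrow _ _ _).subtypeEquiv fun ρ => ?_).trans subtypeProdEquivProd
  rw [isCommuting_comp_iff hglue, isCommuting_prod_iff, orbit_subtypeCongrHom_eq_iff hx]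
  exact and_right_comm

lemma commCount_eq_sum (x : α) :
    commCount ℓ α = ∑ S : Finset α with x ∈ S, transCount ℓ S * commCount ℓ {a // a ∉ S} := by
  let f (π : {π : Fin ℓ → Perm α // IsCommuting π}) : {S : Finset α // x ∈ S} :=
    ⟨orbit π.1 x, mem_orbit_self π.1 x⟩
  rw [commCount, ← Nat.card_congr (sigmaFiberEquiv f), Nat.card_sigma,
    Finset.sum_subtype _ (p := fun S : Finset α => x ∈ S) (fun S => by simp)]
  refine Finset.sum_congr rfl fun S _ => ?_
  rw [← card_commuting_orbit_eq S.2]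
  exact Nat.card_congr ((subtypeEquivRight fun _ => Subtype.ext_iff).trans
    (subtypeSubtypeEquivSubtypeInter IsCommuting fun π => orbit π x = S))

end Decomposition

lemma commCount_pos [Finite α] : 0 < commCount ℓ α :=
  Nat.card_pos_iff.2 ⟨⟨⟨1, fun _ _ => Commute.one_left 1⟩⟩, inferInstance⟩

lemma transCount_le [Finite α] [Nonempty α] :
    transCount ℓ α ≤
      Nat.card {H : Subgroup (Perm α) // Nat.card H = Nat.card α} * Nat.card α ^ ℓ := by
  let Ω := {H : Subgroup (Perm α) // Nat.card H = Nat.card α}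
  have := Fintype.ofFinite Ω
  let f (π : {π : Fin ℓ → Perm α // IsCommuting π ∧ IsTransitive π}) : Σ H : Ω, Fin ℓ → H.1 :=
    ⟨⟨gen π.1, π.2.1.card_gen π.2.2 (Classical.arbitrary α)⟩, fun i => ⟨π.1 i, mem_gen π.1 i⟩⟩
  have hf : Function.Injective f := fun π π' h =>
    Subtype.ext (funext fun i => by simpa [f] using congrArg (fun z => (z.2 i : Perm α)) h)
  calc transCount ℓ α ≤ Nat.card (Σ H : Ω, Fin ℓ → H.1) := Nat.card_le_card_of_injective f hf
    _ = ∑ H : Ω, Nat.card α ^ ℓ := by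
      rw [Nat.card_sigma]
      exact Finset.sum_congr rfl fun H _ => by rw [Nat.card_fun, H.2, Nat.card_fin]
    _ = Nat.card Ω * Nat.card α ^ ℓ := by simp [Nat.card_eq_fintype_card]

lemma card_pow_three_eq_one : Nat.card {σ : Perm (Fin 3) // σ ^ 3 = 1} = 3 := by
  rw [Nat.card_eq_fintype_card]
  decide

lemma transCount_three_le : transCount ℓ (Fin 3) ≤ 3 ^ ℓ := by
  have hcube (π : {π : Fin ℓ → Perm (Fin 3) // IsCommuting π ∧ IsTransitive π}) (i : Fin ℓ) :
      π.1 i ^ 3 = 1 := by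
    have h3 : Nat.card (gen π.1) = 3 := by simpa using π.2.1.card_gen π.2.2 0
    simpa [h3] using
      congrArg Subtype.val (pow_card_eq_one' (x := (⟨π.1 i, mem_gen π.1 i⟩ : gen π.1)))
  calc transCount ℓ (Fin 3) ≤ Nat.card (Fin ℓ → {σ : Perm (Fin 3) // σ ^ 3 = 1}) :=
        Nat.card_le_card_of_injective (fun π i => ⟨π.1 i, hcube π i⟩) fun π π' h =>
          Subtype.ext (funext fun i => congrArg Subtype.val (congrFun h i))
    _ = 3 ^ ℓ := by rw [Nat.card_fun, card_pow_three_eq_one, Nat.card_fin]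

lemma three_pow_le_transCount_three : 3 ^ ℓ ≤ transCount ℓ (Fin 3) + 1 := by
  have hcomm : ∀ σ τ : Perm (Fin 3), σ ^ 3 = 1 → τ ^ 3 = 1 → σ * τ = τ * σ := by decide
  have htrans : ∀ σ : Perm (Fin 3), σ ^ 3 = 1 → σ ≠ 1 → ∀ y, ∃ k : Fin 3, (σ ^ (k : ℕ)) 0 = y := by
    decide
  let one : {σ : Perm (Fin 3) // σ ^ 3 = 1} := ⟨1, one_pow 3⟩
  let f (ρ : {ρ : Fin ℓ → {σ : Perm (Fin 3) // σ ^ 3 = 1} // ρ ≠ fun _ => one}) :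
      {π : Fin ℓ → Perm (Fin 3) // IsCommuting π ∧ IsTransitive π} :=
    ⟨fun i => ρ.1 i, fun i j => hcomm _ _ (ρ.1 i).2 (ρ.1 j).2, by
      obtain ⟨i, hi⟩ := Function.ne_iff.1 ρ.2
      rw [isTransitive_iff_base 0]
      intro y
      obtain ⟨k, hk⟩ := htrans _ (ρ.1 i).2 (fun h => hi (Subtype.ext h)) y
      exact ⟨_, pow_mem (mem_gen _ i) k, hk⟩⟩
  rw [← Nat.sub_le_iff_le_add]
  calc 3 ^ ℓ - 1 = Nat.card {ρ : Fin ℓ → {σ : Perm (Fin 3) // σ ^ 3 = 1} // ρ ≠ fun _ => one} := by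
        rw [Nat.card_eq_fintype_card, Fintype.card_subtype_compl, Fintype.card_subtype_eq,
          ← Nat.card_eq_fintype_card, Nat.card_fun, card_pow_three_eq_one, Nat.card_fin]
    _ ≤ transCount ℓ (Fin 3) := Nat.card_le_card_of_injective f fun ρ ρ' h =>
        Subtype.ext (funext fun i => Subtype.ext (congrFun (congrArg Subtype.val h) i))

lemma commCount_fin_succ (m : ℕ) :
    commCount ℓ (Fin (m + 1)) = ∑ S : Finset (Fin (m + 1)) with 0 ∈ S,
      transCount ℓ (Fin #S) * commCount ℓ (Fin (m + 1 - #S)) := by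
  rw [commCount_eq_sum 0]
  refine sum_congr rfl fun S _ => ?_
  rw [transCount_congr (Fintype.equivFinOfCardEq (Fintype.card_coe S)),
    commCount_congr (Fintype.equivFinOfCardEq (by
      rw [Fintype.card_subtype_compl, Fintype.card_coe, Fintype.card_fin]))]

lemma card_filter_mem_card_eq_succ [Fintype α] [DecidableEq α] (x : α) (k : ℕ) :
    #{S : Finset α | x ∈ S ∧ #S = k + 1} = (Fintype.card α - 1).choose k := by
  rw [← card_univ, ← card_erase_of_mem (mem_univ x), ← card_powersetCard]
  refine card_nbij' (·.erase x) (insert x) ?_ ?_ ?_ ?_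
  · intro S hS
    simp_all [card_erase_of_mem, erase_subset_erase]
  · intro S hS
    obtain ⟨hsub, hcard⟩ := mem_powersetCard.1 hS
    have hx : x ∉ S := fun h => by simpa using hsub h
    simp_all
  · intro S hS
    simp_all [insert_erase]
  · intro S hS
    have hx : x ∉ S := fun h => by simpa using (mem_powersetCard.1 hS).1 h
    simp [erase_insert hx]

lemma cube_lt_three_pow {k : ℕ} (hk : k ≠ 3) : k ^ 3 < 3 ^ k := by
  rcases lt_or_ge k 4 with hk4 | hk4
  · interval_cases k <;> simp_all
  · induction k, hk4 using Nat.le_induction with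
    | base => norm_num
    | succ k hk4 ih =>
      calc (k + 1) ^ 3 ≤ 3 * k ^ 3 := by nlinarith [Nat.mul_le_mul hk4 hk4]
        _ < 3 * 3 ^ k := by linarith [ih (by omega)]
        _ = 3 ^ (k + 1) := by ring

noncomputable def scale (ℓ : ℕ) : ℝ := 3 ^ (((ℓ : ℝ) - 1) / 3)

lemma scale_pos (ℓ : ℕ) : 0 < scale ℓ := Real.rpow_pos_of_pos (by norm_num) _

lemma scale_pow (ℓ k : ℕ) :
    scale ℓ ^ k = ((3 : ℝ) ^ ((k : ℝ) / 3)) ^ ℓ / (3 : ℝ) ^ ((k : ℝ) / 3) := by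
  rw [scale, ← Real.rpow_natCast, ← Real.rpow_natCast _ ℓ, ← Real.rpow_mul (by norm_num),
    ← Real.rpow_mul (by norm_num), ← Real.rpow_sub (by norm_num)]
  ring_nf

lemma scale_pow_three (ℓ : ℕ) : scale ℓ ^ 3 = 3 ^ ℓ / 3 := by
  simp [scale_pow]

lemma natCast_lt_three_rpow {k : ℕ} (hk : k ≠ 3) : (k : ℝ) < (3 : ℝ) ^ ((k : ℝ) / 3) := by
  have hcube : ((3 : ℝ) ^ ((k : ℝ) / 3)) ^ 3 = 3 ^ k := by
    rw [← Real.rpow_natCast, ← Real.rpow_mul (by norm_num)]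
    norm_num
  refine lt_of_pow_lt_pow_left₀ 3 (by positivity) ?_
  rw [hcube]
  exact_mod_cast cube_lt_three_pow hk

lemma tendsto_transCount_three :
    Tendsto (fun ℓ => (transCount ℓ (Fin 3) : ℝ) / scale ℓ ^ 3) atTop (𝓝 3) := by
  have lower (ℓ : ℕ) : 3 - 3 * (1 / 3) ^ ℓ ≤ (transCount ℓ (Fin 3) : ℝ) / scale ℓ ^ 3 := by
    have h : (3 : ℝ) ^ ℓ ≤ transCount ℓ (Fin 3) + 1 := by
      exact_mod_cast three_pow_le_transCount_three
    rw [scale_pow_three, le_div_iff₀ (by positivity), one_div, inv_pow]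
    field_simp
    linarith
  have upper (ℓ : ℕ) : (transCount ℓ (Fin 3) : ℝ) / scale ℓ ^ 3 ≤ 3 := by
    have h : (transCount ℓ (Fin 3) : ℝ) ≤ 3 ^ ℓ := by exact_mod_cast transCount_three_le
    rw [scale_pow_three, div_le_iff₀ (by positivity)]
    linarith
  refine tendsto_of_tendsto_of_tendsto_of_le_of_le ?_ tendsto_const_nhds lower upper
  simpa using ((tendsto_pow_atTop_nhds_zero_of_lt_one (r := (1 / 3 : ℝ)) (by norm_num)
    (by norm_num)).const_mul 3).const_sub 3

lemma tendsto_transCount_of_ne_three {k : ℕ} (hk0 : k ≠ 0) (hk3 : k ≠ 3) :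
    Tendsto (fun ℓ => (transCount ℓ (Fin k) : ℝ) / scale ℓ ^ k) atTop (𝓝 0) := by
  have : NeZero k := ⟨hk0⟩
  set c : ℝ := 3 ^ ((k : ℝ) / 3)
  have hc : 0 < c := by positivity
  obtain ⟨A, hA⟩ : ∃ A : ℝ, ∀ ℓ, (transCount ℓ (Fin k) : ℝ) ≤ A * k ^ ℓ := by
    refine ⟨Nat.card {H : Subgroup (Perm (Fin k)) // Nat.card H = k}, fun ℓ => ?_⟩
    have h := transCount_le (ℓ := ℓ) (α := Fin k)
    rw [Nat.card_fin] at h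
    exact_mod_cast h
  have upper (ℓ : ℕ) : (transCount ℓ (Fin k) : ℝ) / scale ℓ ^ k ≤ A * c * (k / c) ^ ℓ := by
    rw [scale_pow, div_le_iff₀ (by positivity), div_pow]
    calc (transCount ℓ (Fin k) : ℝ) ≤ A * k ^ ℓ := hA ℓ
      _ = A * c * (k ^ ℓ / c ^ ℓ) * (c ^ ℓ / c) := by field_simp
  refine squeeze_zero (fun ℓ => by have := scale_pos ℓ; positivity) upper ?_
  simpa using (tendsto_pow_atTop_nhds_zero_of_lt_one (by positivity)
    ((div_lt_one hc).2 (natCast_lt_three_rpow hk3))).const_mul (A * c)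

def transLimit (k : ℕ) : ℝ := if k = 3 then 3 else 0

lemma tendsto_transCount {k : ℕ} (hk : k ≠ 0) :
    Tendsto (fun ℓ => (transCount ℓ (Fin k) : ℝ) / scale ℓ ^ k) atTop (𝓝 (transLimit k)) := by
  unfold transLimit
  split_ifs with hk3
  · subst hk3
    exact tendsto_transCount_three
  · exact tendsto_transCount_of_ne_three hk hk3

noncomputable def normLimit (n : ℕ) : ℝ :=
  if 3 ∣ n then ((2 : ℝ) ^ (n / 3) * (n / 3)!)⁻¹ else 0

lemma normLimit_three_mul (n : ℕ) : normLimit (3 * n) = ((2 : ℝ) ^ n * n !)⁻¹ := by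
  simp [normLimit]

lemma normLimit_of_not_dvd {n : ℕ} (h : ¬ 3 ∣ n) : normLimit n = 0 := if_neg h

lemma normLimit_add_three (m : ℕ) : normLimit (m + 3) = 3 / (2 * (m + 3)) * normLimit m := by
  by_cases h : 3 ∣ m
  · obtain ⟨d, rfl⟩ := h
    rw [show 3 * d + 3 = 3 * (d + 1) by ring, normLimit_three_mul, normLimit_three_mul, pow_succ,
      Nat.factorial_succ]
    push_cast
    field_simp
  · rw [normLimit_of_not_dvd h, normLimit_of_not_dvd (by omega), mul_zero]

lemma sum_transLimit_mul (m : ℕ) :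
    ∑ S : Finset (Fin (m + 1)) with 0 ∈ S,
      transLimit #S * normLimit (m + 1 - #S) * ((m + 1 - #S)! / (m + 1)! : ℝ) =
      normLimit (m + 1) := by
  have hterm : ∀ S ∈ ({S : Finset (Fin (m + 1)) | 0 ∈ S} : Finset _),
      transLimit #S * normLimit (m + 1 - #S) * ((m + 1 - #S)! / (m + 1)! : ℝ) =
        if #S = 2 + 1 then 3 * normLimit (m - 2) * ((m - 2)! / (m + 1)! : ℝ) else 0 := by
    intro S _
    unfold transLimit
    split_ifs with h
    · rw [h, show m + 1 - (2 + 1) = m - 2 by omega]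
    · simp
  rw [sum_congr rfl hterm, ← sum_filter, filter_filter, sum_const, card_filter_mem_card_eq_succ,
    Fintype.card_fin, nsmul_eq_mul, Nat.add_sub_cancel]
  rcases lt_or_ge m 2 with hm | hm
  · interval_cases m <;> simp [normLimit]
  · obtain ⟨q, rfl⟩ := Nat.exists_eq_add_of_le' hm
    rw [show q + 2 + 1 = q + 3 by ring, normLimit_add_three, Nat.add_sub_cancel,
      Nat.cast_choose_two, Nat.factorial_succ (q + 2), Nat.factorial_succ (q + 1),
      Nat.factorial_succ q]
    push_cast
    field_simp
    ring

lemma commCount_fin_zero : commCount ℓ (Fin 0) = 1 :=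
  Nat.card_eq_one_iff_unique.2 ⟨inferInstance, ⟨⟨1, fun _ _ => Commute.one_left 1⟩⟩⟩

noncomputable def normCount (ℓ n : ℕ) : ℝ := commCount ℓ (Fin n) / (n ! * scale ℓ ^ n)

lemma normCount_succ (ℓ m : ℕ) :
    normCount ℓ (m + 1) = ∑ S : Finset (Fin (m + 1)) with 0 ∈ S,
      (transCount ℓ (Fin #S) : ℝ) / scale ℓ ^ #S * normCount ℓ (m + 1 - #S) *
        ((m + 1 - #S)! / (m + 1)! : ℝ) := by
  rw [normCount, commCount_fin_succ, Nat.cast_sum, sum_div]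
  refine sum_congr rfl fun S _ => ?_
  have hS : #S ≤ m + 1 := (card_le_univ S).trans_eq (Fintype.card_fin _)
  have hpow : scale ℓ ^ (m + 1) = scale ℓ ^ #S * scale ℓ ^ (m + 1 - #S) := by
    rw [← pow_add, Nat.add_sub_cancel' hS]
  have := scale_pos ℓ
  rw [normCount, hpow]
  push_cast
  field_simp

lemma tendsto_normCount (n : ℕ) : Tendsto (normCount · n) atTop (𝓝 (normLimit n)) := by
  induction n using Nat.strong_induction_on with
  | _ n ih =>
  rcases n with _ | m
  · simp [normCount, normLimit, commCount_fin_zero]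
  · simp_rw [normCount_succ]
    rw [← sum_transLimit_mul]
    refine tendsto_finsetSum _ fun S hS => ?_
    have hS0 : S.card ≠ 0 := Finset.card_ne_zero_of_mem (Finset.mem_filter.1 hS).2
    exact ((tendsto_transCount hS0).mul (ih _ (by omega))).mul_const _

end CommutingPerms

section Ratio

open CommutingPerms

lemma N_pos (ℓ n : ℕ) : 0 < N ℓ n :=
  div_pos (Nat.cast_pos.2 commCount_pos) (Nat.cast_pos.2 n.factorial_pos)

lemma N_eq_normCount_mul (ℓ n : ℕ) : (N ℓ n : ℝ) = normCount ℓ n * scale ℓ ^ n := by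
  have := scale_pos ℓ
  rw [normCount, N]
  push_cast
  field_simp
  rfl

lemma normLimit_mul_div_normLimit (A B : ℕ) :
    normLimit (3 * A) * normLimit (3 * B) / normLimit (3 * A + 3 * B) = (A + B).choose A := by
  rw [← mul_add, normLimit_three_mul, normLimit_three_mul, normLimit_three_mul,
    Nat.cast_choose ℝ (Nat.le_add_right A B), Nat.add_sub_cancel_left, pow_add]
  field_simp

lemma one_lt_choose_add {A B : ℕ} (hA : 0 < A) (hB : 0 < B) : 1 < (A + B).choose A := by
  obtain ⟨A, rfl⟩ : ∃ A', A = A' + 1 := ⟨A - 1, by omega⟩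
  rw [show A + 1 + B = A + B + 1 by omega, Nat.choose_succ_succ']
  have := Nat.choose_pos (Nat.le_add_right A B)
  have := Nat.choose_pos (show A + 1 ≤ A + B by omega)
  omega

lemma tendsto_N_mul_N_div_N (A B : ℕ) :
    Tendsto (fun ℓ : ℕ => ((N ℓ (3 * A) * N ℓ (3 * B) / N ℓ (3 * A + 3 * B) : ℚ) : ℝ))
      atTop (𝓝 ((A + B).choose A : ℝ)) := by
  have hratio (ℓ : ℕ) : ((N ℓ (3 * A) * N ℓ (3 * B) / N ℓ (3 * A + 3 * B) : ℚ) : ℝ) =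
      normCount ℓ (3 * A) * normCount ℓ (3 * B) / normCount ℓ (3 * A + 3 * B) := by
    have := scale_pos ℓ
    push_cast
    rw [N_eq_normCount_mul, N_eq_normCount_mul, N_eq_normCount_mul, pow_add]
    field_simp
  rw [← normLimit_mul_div_normLimit]
  refine (((tendsto_normCount _).mul (tendsto_normCount _)).div (tendsto_normCount _)
    ?_).congr fun ℓ => (hratio ℓ).symm
  rw [← mul_add, normLimit_three_mul]
  positivity

end Ratio

open Filter in
theorem ratio_tendsto_binom (a b : ℕ) (ha : 2 ≤ a) (hb : 2 ≤ b)
    (ha3 : a % 3 = 0) (hb3 : b % 3 = 0) :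
    Tendsto (fun ℓ : ℕ => ((N ℓ a * N ℓ b / N ℓ (a + b) : ℚ) : ℝ)) atTop
        (nhds (Nat.choose ((a + b) / 3) (a / 3) : ℝ)) ∧
      ((a, b) ≠ (3, 3) →
        ∃ L : ℕ, ∀ ℓ : ℕ, L ≤ ℓ → N ℓ a * N ℓ b - N ℓ (a + b) > 0) := by
  obtain ⟨A, rfl⟩ : 3 ∣ a := Nat.dvd_of_mod_eq_zero ha3
  obtain ⟨B, rfl⟩ : 3 ∣ b := Nat.dvd_of_mod_eq_zero hb3
  have hlim := tendsto_N_mul_N_div_N A B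
  refine ⟨by rwa [show (3 * A + 3 * B) / 3 = A + B by omega, show 3 * A / 3 = A by omega],
    fun _ => ?_⟩
  have hchoose : (1 : ℝ) < (A + B).choose A := by
    exact_mod_cast one_lt_choose_add (by omega) (by omega)
  obtain ⟨L, hL⟩ := eventually_atTop.1 (hlim.eventually (eventually_gt_nhds hchoose))
  refine ⟨L, fun ℓ hℓ => ?_⟩
  have h1 : (1 : ℚ) < N ℓ (3 * A) * N ℓ (3 * B) / N ℓ (3 * A + 3 * B) := by
    exact_mod_cast hL ℓ hℓ
  linarith [(one_lt_div (N_pos ℓ (3 * A + 3 * B))).1 h1]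
end
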